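/- Let d ≥ 1 and p ≥ 0 be integers and let C₀ > 0. There exists a constant C = C(d,p,C₀) such that for every h > 0, every pair of axis-parallel closed cubes S, T ⊂ ℝ^d of side length h with diam(S ∪ T) ≤ C₀ h, and every polynomial q on ℝ^d of degree at most p in each variable, one has ∫_T q(x)² dx ≤ C ∫_S q(x)² dx. -/

import Mathlib

/-!
On the finite-dimensional space `ℚ_p`, `q ↦ ∫_{[0,1]^d} q²` is positive definite: a polynomial
vanishing on the open unit box vanishes on a grid of `(p + 1)^d` points in it, hence is zero by
the combinatorial Nullstellensatz. This form and `q ↦ q(y)²` are continuous and 2-homogeneous in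
the coordinates of `q`, so compactness of the unit sphere, and of the set of points `y`, gives
`q(y)² ≤ C ∫_{[0,1]^d} q²` uniformly for `y` in a fixed ball. Since `ℚ_p` is invariant under
`x ↦ a + h x`, rescaling `S` to the unit cube puts `T` inside that ball, and integrating the
pointwise bound over `T` gives the claim.
-/

open MeasureTheory

noncomputable section

/-- The axis-parallel closed cube in `ℝ^d` with lower corner `a` and side length `h`. -/
def cube (d : ℕ) (h : ℝ) (a : EuclideanSpace ℝ (Fin d)) : Set (EuclideanSpace ℝ (Fin d)) :=
  {x | ∀ i, a i ≤ x i ∧ x i ≤ a i + h}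

/-- `q : ℝ^d → ℝ` is a polynomial function of degree at most `p` in each variable. -/
def IsQp (d p : ℕ) (q : EuclideanSpace ℝ (Fin d) → ℝ) : Prop :=
  ∃ P : MvPolynomial (Fin d) ℝ, (∀ i, P.degreeOf i ≤ p) ∧
    ∀ x : EuclideanSpace ℝ (Fin d), q x = MvPolynomial.eval (fun i => x i) P

open Metric MvPolynomial

theorem exists_le_mul_of_sq_homogeneous {Y E : Type*} [TopologicalSpace Y]
    [NormedAddCommGroup E] [NormedSpace ℝ E] [FiniteDimensional ℝ E]
    {f : E → Y → ℝ} {g : E → ℝ} (hf : Continuous (Function.uncurry f)) (hg : Continuous g)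
    (hf_smul : ∀ t v y, f (t • v) y = t ^ 2 * f v y) (hg_smul : ∀ t v, g (t • v) = t ^ 2 * g v)
    (hg_pos : ∀ v ≠ 0, 0 < g v) {K : Set Y} (hK : IsCompact K) :
    ∃ C, 0 < C ∧ ∀ v, ∀ y ∈ K, f v y ≤ C * g v := by
  have hS : IsCompact (sphere (0 : E) 1) := isCompact_sphere 0 1
  obtain ⟨M, hM⟩ := (hS.prod hK).bddAbove_image hf.continuousOn
  obtain ⟨ε, hε, hgε⟩ := hS.exists_forall_le' hg.continuousOn
    fun v hv => hg_pos v (ne_zero_of_mem_unit_sphere ⟨v, hv⟩)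
  refine ⟨max M 1 / ε, by positivity, fun v y hy => ?_⟩
  rcases eq_or_ne v 0 with rfl | hv
  · have hf0 := hf_smul 0 0 y
    have hg0 := hg_smul 0 0
    norm_num at hf0 hg0
    rw [hf0, hg0, mul_zero]
  have hu : ‖v‖⁻¹ • v ∈ sphere (0 : E) 1 := by
    simp [norm_smul, inv_mul_cancel₀ (norm_ne_zero_iff.2 hv)]
  have hfu : f (‖v‖⁻¹ • v) y ≤ max M 1 / ε * g (‖v‖⁻¹ • v) :=
    calc f (‖v‖⁻¹ • v) y ≤ max M 1 := (hM ⟨(_, y), ⟨hu, hy⟩, rfl⟩).trans (le_max_left _ _)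
      _ = max M 1 / ε * ε := (div_mul_cancel₀ _ hε.ne').symm
      _ ≤ max M 1 / ε * g (‖v‖⁻¹ • v) := by gcongr; exact hgε _ hu
  have hv_eq : v = ‖v‖ • ‖v‖⁻¹ • v := by
    rw [smul_smul, mul_inv_cancel₀ (norm_ne_zero_iff.2 hv), one_smul]
  rw [hv_eq, hf_smul, hg_smul, mul_left_comm]
  gcongr

theorem Submodule.exists_sq_le_mul_setIntegral_sq {X : Type*} [TopologicalSpace X]
    [MeasurableSpace X] [OpensMeasurableSpace X] {μ : Measure X} [IsLocallyFiniteMeasure μ]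
    (V : Submodule ℝ (X → ℝ)) [FiniteDimensional ℝ V] (hV : ∀ f ∈ V, Continuous f)
    {s : Set X} (hs : IsCompact s) (hdef : ∀ f ∈ V, ∫ x in s, f x ^ 2 ∂μ = 0 → f = 0)
    {K : Set X} (hK : IsCompact K) :
    ∃ C, 0 < C ∧ ∀ f ∈ V, ∀ x ∈ K, f x ^ 2 ≤ C * ∫ x in s, f x ^ 2 ∂μ := by
  let b := Module.finBasis ℝ V
  let φ : (Fin (Module.finrank ℝ V) → ℝ) →ₗ[ℝ] X → ℝ := V.subtype ∘ₗ b.equivFun.symm.toLinearMap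
  have hφ : ∀ c x, φ c x = ∑ j, c j * (b j : X → ℝ) x := fun c x => by
    simp [φ, Finset.sum_apply]
  have hφ_inj : Function.Injective φ := V.injective_subtype.comp b.equivFun.symm.injective
  have hφ_cont : Continuous (Function.uncurry fun c x => φ c x ^ 2) := by
    have := fun j => hV _ (b j).2
    simp only [Function.uncurry_def, hφ]
    fun_prop
  have hφ_pos : ∀ c ≠ 0, 0 < ∫ x in s, φ c x ^ 2 ∂μ := fun c hc => by
    refine lt_of_le_of_ne (setIntegral_nonneg_of_ae_restrict ?_) fun h => hc ?_
    · exact Filter.Eventually.of_forall fun x => sq_nonneg _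
    · exact hφ_inj ((hdef _ (b.equivFun.symm c).2 h.symm).trans (map_zero φ).symm)
  obtain ⟨C, hC, hCφ⟩ := exists_le_mul_of_sq_homogeneous (f := fun c x => φ c x ^ 2)
    (g := fun c => ∫ x in s, φ c x ^ 2 ∂μ) hφ_cont
    (continuous_parametric_integral_of_continuous hφ_cont hs)
    (fun t c x => by simp [mul_pow]) (fun t c => by simp [mul_pow, integral_const_mul])
    hφ_pos hK
  refine ⟨C, hC, fun f hf x hx => ?_⟩
  have hf_eq : f = φ (b.equivFun ⟨f, hf⟩) := by simp [φ]
  rw [hf_eq]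
  exact hCφ _ x hx

section Cube

variable {d : ℕ}

lemma cube_eq_preimage (h : ℝ) (a : EuclideanSpace ℝ (Fin d)) :
    cube d h a = WithLp.ofLp ⁻¹' Set.univ.pi fun i => Set.Icc (a i) (a i + h) := by
  ext x
  simp only [cube, Set.mem_ofPred_eq, Set.mem_preimage, Set.mem_univ_pi, Set.mem_Icc]

lemma isCompact_cube (h : ℝ) (a : EuclideanSpace ℝ (Fin d)) : IsCompact (cube d h a) := by
  rw [cube_eq_preimage]
  exact (PiLp.homeomorph 2 _).isCompact_preimage.2 (isCompact_univ_pi fun _ => isCompact_Icc)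

lemma left_mem_cube {h : ℝ} (hh : 0 ≤ h) (a : EuclideanSpace ℝ (Fin d)) : a ∈ cube d h a :=
  fun _ => ⟨le_rfl, le_add_of_nonneg_right hh⟩

lemma measureReal_cube {h : ℝ} (hh : 0 ≤ h) (a : EuclideanSpace ℝ (Fin d)) :
    volume.real (cube d h a) = h ^ d := by
  rw [measureReal_def, cube_eq_preimage,
    (PiLp.volume_preserving_ofLp (Fin d)).measure_preimage
      (MeasurableSet.univ_pi fun _ => measurableSet_Icc).nullMeasurableSet]
  simp [Real.volume_Icc_pi, hh]

open Pointwise in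
lemma smul_cube_one_zero {h : ℝ} (hh : 0 < h) : h • cube d 1 0 = cube d h 0 := by
  ext x
  rw [Set.mem_smul_set_iff_inv_smul_mem₀ hh.ne']
  simp [cube, le_inv_mul_iff₀ hh, inv_mul_le_iff₀ hh]

lemma preimage_add_left_cube (h : ℝ) (a : EuclideanSpace ℝ (Fin d)) :
    (a + ·) ⁻¹' cube d h a = cube d h 0 := by
  ext x
  simp [cube]

lemma setIntegral_cube {h : ℝ} (hh : 0 < h) (a : EuclideanSpace ℝ (Fin d))
    (f : EuclideanSpace ℝ (Fin d) → ℝ) :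
    ∫ x in cube d h a, f x = h ^ d * ∫ y in cube d 1 0, f (a + h • y) := by
  rw [Measure.setIntegral_comp_smul_of_pos _ (fun x => f (a + x)) _ hh, smul_cube_one_zero hh,
    ← preimage_add_left_cube h a, (measurePreserving_add_left volume a).setIntegral_preimage_emb
      (MeasurableEquiv.addLeft a).measurableEmbedding, finrank_euclideanSpace_fin, smul_eq_mul,
    mul_inv_cancel_left₀ (by positivity)]

end Cube

namespace MvPolynomial

variable {σ R : Type*} [CommSemiring R]

lemma mem_restrictDegree_iff_degreeOf_le (P : MvPolynomial σ R) (n : ℕ) :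
    P ∈ restrictDegree σ R n ↔ ∀ i, degreeOf i P ≤ n := by
  simp only [mem_restrictDegree, degreeOf_le_iff]
  exact ⟨fun h i m hm => h m hm i, fun h m hm i => h i m hm⟩

lemma degreeOf_bind₁_le [DecidableEq σ] (f : σ → MvPolynomial σ R) (i : σ)
    (hf : ∀ j, degreeOf i (f j) ≤ if j = i then 1 else 0) (P : MvPolynomial σ R) :
    degreeOf i (bind₁ f P) ≤ degreeOf i P := by
  conv_lhs => rw [P.as_sum, map_sum]
  refine (degreeOf_sum_le _ _ _).trans (Finset.sup_le fun m hm => ?_)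
  rw [bind₁_monomial]
  refine (degreeOf_C_mul_le _ _ _).trans ((degreeOf_prod_le _ _ _).trans ?_)
  calc ∑ j ∈ m.support, degreeOf i (f j ^ m j)
      ≤ ∑ j ∈ m.support, if j = i then m j else 0 := by
        refine Finset.sum_le_sum fun j _ => (degreeOf_pow_le _ _ _).trans ?_
        have := Nat.mul_le_mul_left (m j) (hf j)
        split_ifs at this ⊢ <;> simpa using this
    _ ≤ m i := by
        rw [Finset.sum_ite_eq']
        split_ifs <;> simp
    _ ≤ degreeOf i P := monomial_le_degreeOf i hm

lemma degreeOf_C_add_C_mul_X_le [DecidableEq σ] [Nontrivial R] (a b : R) (i j : σ) :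
    degreeOf i (C a + C b * X j : MvPolynomial σ R) ≤ if j = i then 1 else 0 := by
  refine (degreeOf_add_le _ _ _).trans (max_le (by simp) ?_)
  refine (degreeOf_C_mul_le _ _ _).trans ?_
  rw [degreeOf_X]
  split_ifs <;> simp_all [eq_comm]

end MvPolynomial

lemma IsQp.comp_affine {d p : ℕ} {q : EuclideanSpace ℝ (Fin d) → ℝ} (hq : IsQp d p q)
    (a : EuclideanSpace ℝ (Fin d)) (h : ℝ) : IsQp d p fun y => q (a + h • y) := by
  classical
  obtain ⟨P, hdeg, heval⟩ := hq
  refine ⟨bind₁ (fun j => C (a j) + C h * X j) P, fun i =>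
    (degreeOf_bind₁_le _ i (fun j => degreeOf_C_add_C_mul_X_le _ _ i j) P).trans (hdeg i),
    fun y => ?_⟩
  simp only [heval, eval, eval₂Hom_bind₁]
  simp

def Qp (d p : ℕ) : Submodule ℝ (EuclideanSpace ℝ (Fin d) → ℝ) :=
  (restrictDegree (Fin d) ℝ p).map (LinearMap.funLeft ℝ ℝ WithLp.ofLp ∘ₗ evalₗ ℝ (Fin d))

section Qp

variable {d p : ℕ}

instance : FiniteDimensional ℝ (Qp d p) := Module.Finite.map _ _

lemma IsQp.mem_Qp {q : EuclideanSpace ℝ (Fin d) → ℝ} (hq : IsQp d p q) : q ∈ Qp d p := by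
  obtain ⟨P, hdeg, heval⟩ := hq
  refine Submodule.mem_map.2 ⟨P, (mem_restrictDegree_iff_degreeOf_le P p).2 hdeg, ?_⟩
  ext x
  simp [heval]

lemma continuous_of_mem_Qp {q : EuclideanSpace ℝ (Fin d) → ℝ} (hq : q ∈ Qp d p) :
    Continuous q := by
  obtain ⟨P, -, rfl⟩ := hq
  exact (continuous_eval P).comp (PiLp.continuous_ofLp 2 _)

lemma eq_zero_of_mem_Qp_of_integral_sq_eq_zero {q : EuclideanSpace ℝ (Fin d) → ℝ}
    (hq : q ∈ Qp d p) (h : ∫ x in cube d 1 0, q x ^ 2 = 0) : q = 0 := by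
  let U : Set (EuclideanSpace ℝ (Fin d)) := WithLp.ofLp ⁻¹' Set.univ.pi fun _ => Set.Ioo 0 1
  have hU : IsOpen U :=
    (isOpen_set_pi Set.finite_univ fun _ _ => isOpen_Ioo).preimage (PiLp.continuous_ofLp 2 _)
  have hUcube : U ⊆ cube d 1 0 := by
    rw [cube_eq_preimage]
    refine Set.preimage_mono (Set.pi_mono fun _ _ => ?_)
    simpa using Set.Ioo_subset_Icc_self
  have hcont := (continuous_of_mem_Qp hq).pow 2
  have hae := (setIntegral_eq_zero_iff_of_nonneg_ae
    (Filter.Eventually.of_forall fun x => sq_nonneg _)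
    (hcont.continuousOn.integrableOn_compact (isCompact_cube 1 0))).1 h
  have hvanish : Set.EqOn (fun x => q x ^ 2) 0 U := Measure.eqOn_open_of_ae_eq
    (ae_restrict_of_ae_restrict_of_subset hUcube hae) hU hcont.continuousOn continuousOn_const
  obtain ⟨P, hP, rfl⟩ := hq
  obtain ⟨S, hS, hScard⟩ := (Set.Ioo_infinite (zero_lt_one' ℝ)).exists_subset_card_eq (p + 1)
  have hP0 : P = 0 := by
    refine eq_zero_of_eval_zero_at_prod_finset P (fun _ => S) (fun i => ?_) fun x hx => ?_
    · rw [hScard]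
      exact Nat.lt_succ_of_le ((mem_restrictDegree_iff_degreeOf_le P p).1 hP i)
    · simpa using hvanish (x := WithLp.toLp 2 x) fun i _ => hS (hx i)
  simp [hP0]

lemma exists_sq_le_mul_setIntegral_cube (d p : ℕ) (R : ℝ) :
    ∃ C, 0 < C ∧ ∀ h, 0 < h → ∀ a x : EuclideanSpace ℝ (Fin d), ‖x - a‖ ≤ R * h →
      ∀ q, IsQp d p q → q x ^ 2 ≤ C / h ^ d * ∫ y in cube d h a, q y ^ 2 := by
  obtain ⟨C, hC, hCq⟩ := (Qp d p).exists_sq_le_mul_setIntegral_sq (fun _ => continuous_of_mem_Qp)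
    (isCompact_cube 1 0) (fun _ => eq_zero_of_mem_Qp_of_integral_sq_eq_zero)
    (isCompact_closedBall 0 R)
  refine ⟨C, hC, fun h hh a x hx q hq => ?_⟩
  have hy : h⁻¹ • (x - a) ∈ closedBall 0 R := by
    rwa [mem_closedBall_zero_iff, norm_smul, norm_inv, Real.norm_of_nonneg hh.le,
      inv_mul_le_iff₀ hh, mul_comm]
  have hbound := hCq _ (hq.comp_affine a h).mem_Qp _ hy
  simp only [smul_inv_smul₀ hh.ne', add_sub_cancel] at hbound
  rw [setIntegral_cube hh]
  field_simp
  exact hbound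

end Qp

theorem statement1_general (d p : ℕ) (C₀ : ℝ) :
    ∃ C : ℝ, 0 < C ∧ ∀ h : ℝ, 0 < h → ∀ a b : EuclideanSpace ℝ (Fin d),
      Metric.diam (cube d h a ∪ cube d h b) ≤ C₀ * h →
      ∀ q : EuclideanSpace ℝ (Fin d) → ℝ, IsQp d p q →
        ∫ x in cube d h b, q x ^ 2 ≤ C * ∫ x in cube d h a, q x ^ 2 := by
  obtain ⟨C, hC, hCq⟩ := exists_sq_le_mul_setIntegral_cube d p C₀
  refine ⟨C, hC, fun h hh a b hdiam q hq => ?_⟩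
  have hpt : ∀ x ∈ cube d h b, q x ^ 2 ≤ C / h ^ d * ∫ x in cube d h a, q x ^ 2 := by
    refine fun x hx => hCq h hh a x ?_ q hq
    rw [← dist_eq_norm]
    exact (dist_le_diam_of_mem ((isCompact_cube h a).union (isCompact_cube h b)).isBounded
      (Or.inr hx) (Or.inl (left_mem_cube hh.le a))).trans hdiam
  have hq_int : IntegrableOn (fun x => q x ^ 2) (cube d h b) :=
    ((continuous_of_mem_Qp hq.mem_Qp).pow 2).continuousOn.integrableOn_compact (isCompact_cube h b)
  calc ∫ x in cube d h b, q x ^ 2 ≤ ∫ x in cube d h b, C / h ^ d * ∫ x in cube d h a, q x ^ 2 :=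
        setIntegral_mono_on hq_int (integrableOn_const (isCompact_cube h b).measure_lt_top.ne)
          (isCompact_cube h b).measurableSet hpt
    _ = C * ∫ x in cube d h a, q x ^ 2 := by
        rw [setIntegral_const, measureReal_cube hh.le, smul_eq_mul]
        field_simp

theorem statement1 (d p : ℕ) (hd : 1 ≤ d) (C₀ : ℝ) (hC₀ : 0 < C₀) :
    ∃ C : ℝ, 0 < C ∧ ∀ h : ℝ, 0 < h → ∀ a b : EuclideanSpace ℝ (Fin d),
      Metric.diam (cube d h a ∪ cube d h b) ≤ C₀ * h →
      ∀ q : EuclideanSpace ℝ (Fin d) → ℝ, IsQp d p q →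
        ∫ x in cube d h b, q x ^ 2 ≤ C * ∫ x in cube d h a, q x ^ 2 :=
  statement1_general d p C₀
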